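/- The trussness of each edge in a graph G equals the value k assigned by the peeling algorithm that, for k = 2,3,4,…, repeatedly removes any remaining edge of support ≤ k-2 (assigning it trussness k) and decrements the support of edges sharing a triangle with it; i.e., the peeling order yields the correct truss decomposition. -/

import Mathlib

variable {V : Type*}

/-- Support of an (unordered) edge in graph `H`: number of common neighbors. -/
noncomputable def esupp [Fintype V] (H : SimpleGraph V) : Sym2 V → ℕ :=
  Sym2.lift ⟨fun u v => Nat.card {w : V // H.Adj u w ∧ H.Adj v w},
    fun _ _ => Nat.card_congr (Equiv.subtypeEquivRight fun _ => and_comm)⟩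

/-- `H` is a subgraph of `G` in which every edge has support at least `k-2`. -/
def IsTrussSub [Fintype V] (G H : SimpleGraph V) (k : ℕ) : Prop :=
  H ≤ G ∧ ∀ e ∈ H.edgeSet, k - 2 ≤ esupp H e

/-- Trussness of an edge: the largest `k` such that some subgraph witnessing
the `k`-truss support condition contains it. -/
noncomputable def etruss [Fintype V] (G : SimpleGraph V) (e : Sym2 V) : ℕ :=
  sSup {k | ∃ H, IsTrussSub G H k ∧ e ∈ H.edgeSet}

/-- The `k`-truss of `G`: the maximal subgraph in which every edge has support `≥ k-2`. -/
noncomputable def trussG [Fintype V] (G : SimpleGraph V) (k : ℕ) : SimpleGraph V :=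
  sSup {H | IsTrussSub G H k}

/-- Anchored truss-subgraph: edges in the anchor set `A` are exempt from the
support constraint. -/
def IsATrussSub [Fintype V] (G H : SimpleGraph V) (A : Set (Sym2 V)) (k : ℕ) : Prop :=
  H ≤ G ∧ ∀ e ∈ H.edgeSet, e ∈ A ∨ k - 2 ≤ esupp H e

/-- Anchored trussness `t^A(e)`. -/
noncomputable def atruss [Fintype V] (G : SimpleGraph V) (A : Set (Sym2 V)) (e : Sym2 V) : ℕ :=
  sSup {k | ∃ H, IsATrussSub G H A k ∧ e ∈ H.edgeSet}

/-- The anchored `k`-truss of `G` with anchor set `A`. -/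
noncomputable def atrussGraph [Fintype V] (G : SimpleGraph V) (A : Set (Sym2 V)) (k : ℕ) :
    SimpleGraph V :=
  sSup {H | IsATrussSub G H A k}

/-- Trussness gain: total increment of trussness over all non-anchor edges. -/
noncomputable def TG [Fintype V] (G : SimpleGraph V) (A : Set (Sym2 V)) : ℕ :=
  ∑ e ∈ (G.edgeSet \ A).toFinite.toFinset, (atruss G A e - etruss G e)

/-- `a b c` form a triangle in `G`. -/
def IsTri (G : SimpleGraph V) (a b c : V) : Prop := G.Adj a b ∧ G.Adj b c ∧ G.Adj a c

/-- The three edges of the triangle on `a b c`. -/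
def triE (a b c : V) : Set (Sym2 V) := {s(a, b), s(b, c), s(a, c)}

/-- Two edges lie in a common triangle of `G`. -/
def ShareTri (G : SimpleGraph V) (e f : Sym2 V) : Prop :=
  ∃ a b c, IsTri G a b c ∧ e ∈ triE a b c ∧ f ∈ triE a b c

/-- Triangle connectivity: chain of triangles, consecutive ones sharing an edge. -/
def TriConn (G : SimpleGraph V) : Sym2 V → Sym2 V → Prop := Relation.TransGen (ShareTri G)

/-- A `k`-truss component: a truss-subgraph whose edges are pairwise
triangle-connected within it, maximal with these properties. -/
def IsTrussComponent [Fintype V] (G S : SimpleGraph V) (k : ℕ) : Prop :=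
  IsTrussSub G S k ∧
  (∀ e ∈ S.edgeSet, ∀ f ∈ S.edgeSet, e = f ∨ TriConn S e f) ∧
  ∀ S', IsTrussSub G S' k →
    (∀ e ∈ S'.edgeSet, ∀ f ∈ S'.edgeSet, e = f ∨ TriConn S' e f) → S ≤ S' → S' = S

/-!
Write `R i` for the graph left after the first `i` edges of the peeling order have been removed.

For `t'(e) ≤ etruss G e`, take the first step `i` whose edge has value at least `t'(e)`: every
edge removed before it has a smaller value, so `e` is still in `R i`, and the peeling hypothesis
says all supports in `R i` are at least `t'(e) - 2`; thus `R i` witnesses trussness `t'(e)`.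

For `etruss G e ≤ t'(e)`, take a witness `H` of level `k` containing `e` and the first edge `f`
of `H` in the peeling order, removed at step `i`. No edge of `H` was removed before, so
`H ≤ R i`, and support is monotone: `k - 2 ≤ supp_H f ≤ supp_{R i} f ≤ t'(f) - 2 ≤ t'(e) - 2`.
-/

section Trussness

variable [Fintype V]

lemma esupp_mono {H H' : SimpleGraph V} (h : H ≤ H') (e : Sym2 V) :
    esupp H e ≤ esupp H' e := by
  induction e using Sym2.ind with
  | _ u v =>
    exact Nat.card_le_card_of_injective (Subtype.map id fun _ hw => ⟨h hw.1, h hw.2⟩)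
      (Subtype.map_injective _ Function.injective_id)

lemma esupp_le_card (H : SimpleGraph V) (e : Sym2 V) : esupp H e ≤ Fintype.card V := by
  induction e using Sym2.ind with
  | _ u v =>
    rw [← Nat.card_eq_fintype_card]
    exact Nat.card_le_card_of_injective Subtype.val Subtype.val_injective

lemma IsTrussSub.anti {G H : SimpleGraph V} {k k' : ℕ} (h : IsTrussSub G H k') (hk : k ≤ k') :
    IsTrussSub G H k :=
  ⟨h.1, fun e he => (Nat.sub_le_sub_right hk 2).trans (h.2 e he)⟩

lemma bddAbove_trussLevels (G : SimpleGraph V) (e : Sym2 V) :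
    BddAbove {k | ∃ H, IsTrussSub G H k ∧ e ∈ H.edgeSet} := by
  refine ⟨Fintype.card V + 2, ?_⟩
  rintro k ⟨H, hH, heH⟩
  have := hH.2 e heH
  have := esupp_le_card H e
  omega

lemma le_etruss {G H : SimpleGraph V} {k : ℕ} {e : Sym2 V} (hH : IsTrussSub G H k)
    (he : e ∈ H.edgeSet) : k ≤ etruss G e :=
  le_csSup (bddAbove_trussLevels G e) ⟨H, hH, he⟩

lemma etruss_le {G : SimpleGraph V} {e : Sym2 V} {m : ℕ}
    (h : ∀ k H, IsTrussSub G H k → e ∈ H.edgeSet → k ≤ m) : etruss G e ≤ m :=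
  csSup_le' fun k ⟨H, hH, he⟩ => h k H hH he

end Trussness

lemma SimpleGraph.le_deleteEdges_of_disjoint {G H : SimpleGraph V} {s : Set (Sym2 V)}
    (hHG : H ≤ G) (hs : Disjoint H.edgeSet s) : H ≤ G.deleteEdges s :=
  (SimpleGraph.deleteEdges_eq_self.mpr hs).ge.trans (SimpleGraph.deleteEdges_mono hHG)

section Peeling

variable [Fintype V] {G : SimpleGraph V} {L : List (Sym2 V)} {t' : Sym2 V → ℕ}

theorem le_etruss_of_peeling
    (hmin : ∀ i (h : i < L.length), (∀ j (hj : j < i), t' L[j] < t' L[i]) →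
      ∀ f ∈ (G.deleteEdges {e | e ∈ L.take i}).edgeSet,
        t' L[i] - 2 ≤ esupp (G.deleteEdges {e | e ∈ L.take i}) f)
    {e : Sym2 V} (he : e ∈ G.edgeSet) (heL : e ∈ L) : t' e ≤ etruss G e := by
  have hex : ∃ i, ∃ h : i < L.length, t' e ≤ t' L[i] := by
    obtain ⟨i, hi, rfl⟩ := List.mem_iff_getElem.mp heL
    exact ⟨i, hi, le_rfl⟩
  obtain ⟨hi, hle⟩ := Nat.find_spec hex
  have hbefore : ∀ j (hj : j < Nat.find hex), t' (L[j]'(hj.trans hi)) < t' e :=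
    fun j hj => not_le.mp fun h => Nat.find_min hex hj ⟨_, h⟩
  have hR := hmin _ hi fun j hj => (hbefore j hj).trans_le hle
  have heR : e ∈ (G.deleteEdges {f | f ∈ L.take (Nat.find hex)}).edgeSet := by
    refine (SimpleGraph.edgeSet_deleteEdges _).symm ▸ ⟨he, fun hmem => ?_⟩
    obtain ⟨j, hj, hje⟩ := List.mem_take_iff_getElem.mp hmem
    exact (hbefore j (lt_min_iff.mp hj).1).ne (congrArg t' hje)
  exact le_etruss (IsTrussSub.anti ⟨SimpleGraph.deleteEdges_le _, hR⟩ hle) heR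

theorem etruss_le_of_peeling (hmono : L.Pairwise fun e f => t' e ≤ t' f)
    (h2 : ∀ e ∈ L, 2 ≤ t' e)
    (hrem : ∀ i (h : i < L.length),
      esupp (G.deleteEdges {e | e ∈ L.take i}) L[i] ≤ t' L[i] - 2)
    {e : Sym2 V} (heL : e ∈ L) : etruss G e ≤ t' e := by
  classical
  refine etruss_le fun k H hH heH => ?_
  obtain ⟨ie, hie, rfl⟩ := List.mem_iff_getElem.mp heL
  have hex : ∃ i, ∃ h : i < L.length, L[i] ∈ H.edgeSet := ⟨ie, hie, heH⟩
  obtain ⟨hi, hiH⟩ := Nat.find_spec hex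
  set i := Nat.find hex
  have hHR : H ≤ G.deleteEdges {f | f ∈ L.take i} := by
    refine SimpleGraph.le_deleteEdges_of_disjoint hH.1 (Set.disjoint_right.mpr ?_)
    intro f hf hfH
    obtain ⟨j, hj, rfl⟩ := List.mem_take_iff_getElem.mp hf
    exact Nat.find_min hex (lt_min_iff.mp hj).1 ⟨_, hfH⟩
  have hk : k - 2 ≤ t' L[i] - 2 := calc
    k - 2 ≤ esupp H L[i] := hH.2 _ hiH
    _ ≤ esupp (G.deleteEdges {f | f ∈ L.take i}) L[i] := esupp_mono hHR _
    _ ≤ t' L[i] - 2 := hrem i hi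
  have hti : t' L[i] ≤ t' L[ie] := by
    rcases (Nat.find_min' hex ⟨hie, heH⟩).lt_or_eq with hlt | rfl
    · exact List.pairwise_iff_getElem.mp hmono _ _ hi hie hlt
    · exact le_rfl
  have := h2 _ (List.getElem_mem hi)
  omega

end Peeling

theorem stmt9_general [Fintype V] (G : SimpleGraph V) (L : List (Sym2 V)) (t' : Sym2 V → ℕ)
    (hmem : ∀ e, e ∈ L ↔ e ∈ G.edgeSet)
    (hmono : L.Pairwise fun e f => t' e ≤ t' f)
    (h2 : ∀ e ∈ L, 2 ≤ t' e)
    (hrem : ∀ i (h : i < L.length),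
      esupp (G.deleteEdges {e | e ∈ L.take i}) (L.get ⟨i, h⟩) ≤ t' (L.get ⟨i, h⟩) - 2)
    (hmin : ∀ i (h : i < L.length),
      (∀ j (hj : j < i), t' (L.get ⟨j, lt_trans hj h⟩) < t' (L.get ⟨i, h⟩)) →
      ∀ f ∈ (G.deleteEdges {e | e ∈ L.take i}).edgeSet,
        t' (L.get ⟨i, h⟩) - 2 ≤ esupp (G.deleteEdges {e | e ∈ L.take i}) f) :
    ∀ e ∈ G.edgeSet, t' e = etruss G e := by
  simp only [List.get_eq_getElem] at hrem hmin
  intro e he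
  have heL := (hmem e).mpr he
  exact le_antisymm (le_etruss_of_peeling hmin he heL) (etruss_le_of_peeling hmono h2 hrem heL)

theorem stmt9 [Fintype V] (G : SimpleGraph V) (L : List (Sym2 V)) (t' : Sym2 V → ℕ)
    (hnd : L.Nodup) (hmem : ∀ e, e ∈ L ↔ e ∈ G.edgeSet)
    (hmono : L.Pairwise fun e f => t' e ≤ t' f)
    (h2 : ∀ e ∈ L, 2 ≤ t' e)
    (hrem : ∀ i (h : i < L.length),
      esupp (G.deleteEdges {e | e ∈ L.take i}) (L.get ⟨i, h⟩) ≤ t' (L.get ⟨i, h⟩) - 2)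
    (hmin : ∀ i (h : i < L.length),
      (∀ j (hj : j < i), t' (L.get ⟨j, lt_trans hj h⟩) < t' (L.get ⟨i, h⟩)) →
      ∀ f ∈ (G.deleteEdges {e | e ∈ L.take i}).edgeSet,
        t' (L.get ⟨i, h⟩) - 2 ≤ esupp (G.deleteEdges {e | e ∈ L.take i}) f) :
    ∀ e ∈ G.edgeSet, t' e = etruss G e :=
  stmt9_general G L t' hmem hmono h2 hrem hmin
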